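/- arXiv:1511.09277 — 2 statements merged into one kernel-verified Lean document; each statement's English description precedes it below -/
import Mathlib

section
/- Let G be a finite bipartite graph with bipartition (X, Y) that contains a 1-anti-factor, i.e., a spanning subgraph F with d_F(x) = 1 for all x ∈ X and d_F(y) ≠ 1 for all y ∈ Y. Then for every subset S ⊆ X, the number of connected components of G − S that do not themselves contain a 1-anti-factor (with respect to the induced bipartition) is at most |S|. -/
attribute [local instance] Classical.propDecidable

/-!
Fix a 1-anti-factor `F` of `G`. A component `C` of `G - S` none of whose vertices has an
`F`-neighbour in `S` is closed under `F`-edges, so `F` restricted to `C` is a 1-anti-factor of `C`.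
Hence every component without a 1-anti-factor sends an `F`-edge to `S`, and since each vertex of
`S ⊆ X` has `F`-degree one, distinct such components use distinct vertices of `S`.
-/

namespace SimpleGraph

def restrictToComponent {V : Type*} {G : SimpleGraph V} {s : Set V} (F : SimpleGraph V)
    (c : (G.induce s).ConnectedComponent) : SimpleGraph s where
  Adj u v := F.Adj u v ∧ u ∈ c.supp ∧ v ∈ c.supp
  symm := ⟨fun _ _ h => ⟨h.1.symm, h.2.2, h.2.1⟩⟩
  loopless := ⟨fun _ h => h.1.ne rfl⟩

variable {V : Type*} {G F : SimpleGraph V} {s : Set V} {c : (G.induce s).ConnectedComponent}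

theorem restrictToComponent_le (hFG : F ≤ G) : restrictToComponent F c ≤ G.induce s :=
  fun _ _ h => hFG h.1

theorem degree_restrictToComponent_of_notMem_supp {v : s}
    [Fintype ((restrictToComponent F c).neighborSet v)] (hv : v ∉ c.supp) :
    (restrictToComponent F c).degree v = 0 := by
  rw [degree_eq_zero_iff_notMem_support]
  rintro ⟨w, h⟩
  exact hv h.2.1

theorem degree_restrictToComponent_of_mem_supp (hFG : F ≤ G) {v : s}
    [Fintype ((restrictToComponent F c).neighborSet v)] [Fintype (F.neighborSet v)]
    (hv : v ∈ c.supp) (hout : ∀ w, F.Adj v w → w ∈ s) :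
    (restrictToComponent F c).degree v = F.degree v := by
  refine Finset.card_bij (fun u _ => (u : V)) ?_ (fun _ _ _ _ h => Subtype.ext h) ?_
  · intro u hu
    exact (mem_neighborFinset _ _ _).2 ((mem_neighborFinset _ _ _).1 hu).1
  · intro w hw
    have hvw : F.Adj v w := (mem_neighborFinset _ _ _).1 hw
    have hadj : (G.induce s).Adj v ⟨w, hout w hvw⟩ := hFG hvw
    have hwc := c.mem_supp_of_adj_mem_supp hv hadj
    exact ⟨⟨w, hout w hvw⟩, (mem_neighborFinset _ _ _).2 ⟨hvw, hv, hwc⟩, rfl⟩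

theorem ncard_components_adj_le [∀ x, Fintype (F.neighborSet x)] (S : Finset V)
    (hS : ∀ x ∈ S, F.degree x ≤ 1) :
    {c : (G.induce s).ConnectedComponent | ∃ v ∈ c.supp, ∃ x ∈ S, F.Adj v x}.ncard
      ≤ S.card := by
  set A := {c : (G.induce s).ConnectedComponent | ∃ v ∈ c.supp, ∃ x ∈ S, F.Adj v x}
  choose v hv x hxS hvx using fun c : A => c.2
  have hinj : Function.Injective (fun c : A => (⟨x c, hxS c⟩ : S)) := by
    intro c₁ c₂ h
    have hx : x c₁ = x c₂ := congrArg Subtype.val h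
    have hv₁ : (v c₁ : V) ∈ F.neighborFinset (x c₁) :=
      (mem_neighborFinset _ _ _).2 (hvx c₁).symm
    have hv₂ : (v c₂ : V) ∈ F.neighborFinset (x c₁) :=
      (mem_neighborFinset _ _ _).2 (hx ▸ hvx c₂).symm
    have hv_eq : v c₁ = v c₂ :=
      Subtype.ext (Finset.card_le_one.1 (hS _ (hxS c₁)) _ hv₁ _ hv₂)
    exact Subtype.ext (ConnectedComponent.eq_of_common_vertex (hv c₁) (hv_eq ▸ hv c₂))
  calc A.ncard = Nat.card A := (Nat.card_coe_set_eq A).symm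
    _ ≤ Nat.card S := Nat.card_le_card_of_injective _ hinj
    _ = S.card := Nat.card_eq_finsetCard S

end SimpleGraph

open SimpleGraph in
theorem stmt_3_general {V : Type*} [Fintype V] (G : SimpleGraph V)
    (X Y : Finset V)
    (hanti : ∃ F : SimpleGraph V, F ≤ G ∧ (∀ x ∈ X, F.degree x = 1) ∧
      (∀ y ∈ Y, F.degree y ≠ 1))
    (S : Finset V) (hS : S ⊆ X) :
    Set.ncard {c : (G.induce {v : V | v ∉ S}).ConnectedComponent |
      ¬ ∃ F : SimpleGraph {v : V | v ∉ S},
          F ≤ G.induce {v : V | v ∉ S} ∧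
          (∀ v ∈ c.supp, ((v : V) ∈ X → F.degree v = 1) ∧ ((v : V) ∈ Y → F.degree v ≠ 1)) ∧
          (∀ v ∉ c.supp, F.degree v = 0)} ≤ S.card := by
  obtain ⟨F, hFG, hFX, hFY⟩ := hanti
  refine (Set.ncard_le_ncard ?_ (Set.toFinite _)).trans
    (ncard_components_adj_le S fun x hx => (hFX x (hS hx)).le)
  intro c hc
  by_contra! hno
  refine hc ⟨restrictToComponent F c, restrictToComponent_le hFG, fun v hv => ?_,
    fun v hv => degree_restrictToComponent_of_notMem_supp hv⟩
  rw [degree_restrictToComponent_of_mem_supp hFG hv fun w hvw hwS => hno ⟨v, hv, w, hwS, hvw⟩]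
  exact ⟨hFX v, hFY v⟩

theorem stmt_3 {V : Type*} [Fintype V] (G : SimpleGraph V)
    (X Y : Finset V) (hdisj : Disjoint X Y) (hcover : X ∪ Y = Finset.univ)
    (hbip : ∀ u v : V, G.Adj u v → (u ∈ X ∧ v ∈ Y) ∨ (u ∈ Y ∧ v ∈ X))
    (hanti : ∃ F : SimpleGraph V, F ≤ G ∧ (∀ x ∈ X, F.degree x = 1) ∧
      (∀ y ∈ Y, F.degree y ≠ 1))
    (S : Finset V) (hS : S ⊆ X) :
    Set.ncard {c : (G.induce {v : V | v ∉ S}).ConnectedComponent |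
      ¬ ∃ F : SimpleGraph {v : V | v ∉ S},
          F ≤ G.induce {v : V | v ∉ S} ∧
          (∀ v ∈ c.supp, ((v : V) ∈ X → F.degree v = 1) ∧ ((v : V) ∈ Y → F.degree v ≠ 1)) ∧
          (∀ v ∉ c.supp, F.degree v = 0)} ≤ S.card :=
  stmt_3_general G X Y hanti S hS
end

section
/- Let k ≥ 1, let G be a k-regular bipartite graph with bipartition (X, Y), and let S ⊆ X. Then the number of connected components C of G − S satisfying |V(C) ∩ X| < |V(C) ∩ Y| is at most |S|. -/
/-!
Let `C` be a component of `G - S` with `A = C ∩ X` and `B = C ∩ Y`. Since `S ⊆ X`, every edge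
at `A` goes to `B` and every edge at `B` goes to `A` or to `S`, so counting edges at `B` gives
`k |B| = k |A| + e(B, S)`. A component with `|A| < |B|` therefore sends at least `k` edges to
`S`; the components are disjoint and `S` receives exactly `k |S|` edges, so there are at most
`|S|` of them.
-/

attribute [local instance] Classical.propDecidable

open Finset

namespace SimpleGraph

variable {V : Type*} {G : SimpleGraph V} {k : ℕ}

theorem ConnectedComponent.mem_image_val_supp_of_adj {s : Set V}
    {c : (G.induce s).ConnectedComponent} {v w : V} (hv : v ∈ Subtype.val '' c.supp)
    (hw : w ∈ s) (hadj : G.Adj v w) : w ∈ Subtype.val '' c.supp := by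
  obtain ⟨v, hv, rfl⟩ := hv
  exact ⟨⟨w, hw⟩, c.mem_supp_of_adj_mem_supp hv (induce_adj.mpr hadj), rfl⟩

-- `Set.Finite.toFinset` rather than `Set.toFinset`: no `Fintype` instance is fixed in the statement
-- that would have to be unified with the (classical) one at the use site.
theorem mul_ncard_le_sum_of_le_sum_supp [Fintype V] {s : Set V} (f : V → ℕ)
    (P : (G.induce s).ConnectedComponent → Prop)
    (h : ∀ c, P c → k ≤ ∑ v ∈ (Subtype.val '' c.supp).toFinite.toFinset, f v) :
    k * {c | P c}.ncard ≤ ∑ v, f v := by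
  set T : (G.induce s).ConnectedComponent → Finset V :=
    fun c => (Subtype.val '' c.supp).toFinite.toFinset
  have hT : (({c | P c}.toFinset : Finset _) : Set _).PairwiseDisjoint T := fun c _ d _ hcd =>
    Set.Finite.disjoint_toFinset.mpr <| (Set.disjoint_image_iff Subtype.val_injective).mpr
      (pairwise_disjoint_supp_connectedComponent _ hcd)
  calc k * {c | P c}.ncard = #{c | P c}.toFinset • k := by
        rw [Set.ncard_eq_toFinset_card', smul_eq_mul, mul_comm]
    _ ≤ ∑ c ∈ {c | P c}.toFinset, ∑ v ∈ T c, f v :=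
        card_nsmul_le_sum _ _ _ fun c hc => h c (Set.mem_toFinset.mp hc)
    _ = ∑ v ∈ {c | P c}.toFinset.biUnion T, f v := (sum_biUnion hT).symm
    _ ≤ ∑ v, f v := sum_le_sum_of_subset (subset_univ _)

section Counting

variable [DecidableRel G.Adj]

theorem sum_card_filter_adj_comm (A B : Finset V) :
    ∑ x ∈ A, #{y ∈ B | G.Adj x y} = ∑ y ∈ B, #{x ∈ A | G.Adj y x} := by
  refine (sum_card_bipartiteAbove_eq_sum_card_bipartiteBelow G.Adj).trans
    (sum_congr rfl fun y _ => ?_)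
  exact congrArg card (filter_congr fun x _ => G.adj_comm x y)

theorem card_filter_adj_eq_degree [Fintype V] {v : V} {T : Finset V}
    (hT : ∀ w, G.Adj v w → w ∈ T) : #{w ∈ T | G.Adj v w} = G.degree v := by
  rw [← card_neighborFinset_eq_degree, neighborFinset_eq_filter]
  congr 1
  ext w
  simpa using hT w

theorem sum_card_filter_adj_eq_mul_card [Fintype V] (hreg : G.IsRegularOfDegree k)
    (S : Finset V) : ∑ v, #{s ∈ S | G.Adj v s} = k * #S := by
  rw [sum_card_filter_adj_comm, sum_congr rfl fun s _ => ?_, sum_const, smul_eq_mul, mul_comm]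
  exact (card_filter_adj_eq_degree fun _ _ => mem_univ _).trans (hreg.degree_eq s)

theorem mul_card_add_sum_card_filter_adj_eq [Fintype V] [DecidableEq V]
    (hreg : G.IsRegularOfDegree k) {A B S : Finset V} (hAS : Disjoint A S)
    (hA : ∀ x ∈ A, ∀ y, G.Adj x y → y ∈ B) (hB : ∀ y ∈ B, ∀ x, G.Adj y x → x ∈ A ∨ x ∈ S) :
    k * #A + ∑ y ∈ B, #{s ∈ S | G.Adj y s} = k * #B := by
  have hdegA : ∀ x ∈ A, #{y ∈ B | G.Adj x y} = k := fun x hx =>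
    (card_filter_adj_eq_degree (hA x hx)).trans (hreg.degree_eq x)
  have hdegB : ∀ y ∈ B, #{x ∈ A | G.Adj y x} + #{s ∈ S | G.Adj y s} = k := by
    intro y hy
    rw [← card_union_of_disjoint (disjoint_filter_filter hAS), ← filter_union,
      card_filter_adj_eq_degree fun x hx => mem_union.2 (hB y hy x hx), hreg.degree_eq]
  calc k * #A + ∑ y ∈ B, #{s ∈ S | G.Adj y s}
      = ∑ x ∈ A, #{y ∈ B | G.Adj x y} + ∑ y ∈ B, #{s ∈ S | G.Adj y s} := by
        rw [sum_congr rfl hdegA, sum_const, smul_eq_mul, mul_comm]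
    _ = ∑ y ∈ B, (#{x ∈ A | G.Adj y x} + #{s ∈ S | G.Adj y s}) := by
        rw [sum_card_filter_adj_comm, sum_add_distrib]
    _ = k * #B := by rw [sum_congr rfl hdegB, sum_const, smul_eq_mul, mul_comm]

theorem le_sum_card_filter_adj_of_card_inter_lt [Fintype V] [DecidableEq V]
    (hreg : G.IsRegularOfDegree k) {X Y : Finset V} (hbip : G.IsBipartiteWith X Y)
    {S T : Finset V} (hSX : S ⊆ X) (hTS : Disjoint T S)
    (hT : ∀ v ∈ T, ∀ w, G.Adj v w → w ∉ S → w ∈ T)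
    (hlt : #(T ∩ X) < #(T ∩ Y)) :
    k ≤ ∑ v ∈ T, #{s ∈ S | G.Adj v s} := by
  have hA : ∀ x ∈ T ∩ X, ∀ y, G.Adj x y → y ∈ T ∩ Y := by
    intro x hx y hxy
    rw [mem_inter] at hx ⊢
    have hy : y ∈ Y := hbip.mem_of_mem_adj hx.2 hxy
    exact ⟨hT x hx.1 y hxy fun hyS => hbip.disjoint.ne_of_mem (hSX hyS) hy rfl, hy⟩
  have hB : ∀ y ∈ T ∩ Y, ∀ x, G.Adj y x → x ∈ T ∩ X ∨ x ∈ S := by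
    intro y hy x hyx
    rw [mem_inter] at hy ⊢
    by_cases hxS : x ∈ S
    · exact .inr hxS
    · exact .inl ⟨hT y hy.1 x hyx hxS, hbip.mem_of_mem_adj' hy.2 hyx.symm⟩
  have hcount := mul_card_add_sum_card_filter_adj_eq hreg
    (disjoint_of_subset_left inter_subset_left hTS) hA hB
  have hsub : ∑ y ∈ T ∩ Y, #{s ∈ S | G.Adj y s} ≤ ∑ v ∈ T, #{s ∈ S | G.Adj v s} :=
    sum_le_sum_of_subset inter_subset_left
  nlinarith

end Counting

end SimpleGraph

theorem stmt_5_general {V : Type*} [Fintype V] (G : SimpleGraph V) (k : ℕ) (hk : 1 ≤ k)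
    (X Y : Finset V) (hdisj : Disjoint X Y)
    (hbip : ∀ u v : V, G.Adj u v → (u ∈ X ∧ v ∈ Y) ∨ (u ∈ Y ∧ v ∈ X))
    (hreg : ∀ v : V, G.degree v = k)
    (S : Finset V) (hS : S ⊆ X) :
    Set.ncard {c : (G.induce {v : V | v ∉ S}).ConnectedComponent |
      ((Subtype.val '' c.supp) ∩ ↑X).ncard < ((Subtype.val '' c.supp) ∩ ↑Y).ncard}
      ≤ S.card := by
  have hbipartite : G.IsBipartiteWith X Y := ⟨disjoint_coe.mpr hdisj, hbip⟩
  refine Nat.le_of_mul_le_mul_left ?_ hk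
  rw [← SimpleGraph.sum_card_filter_adj_eq_mul_card hreg]
  refine SimpleGraph.mul_ncard_le_sum_of_le_sum_supp _ _ fun c hc => ?_
  apply SimpleGraph.le_sum_card_filter_adj_of_card_inter_lt hreg hbipartite hS
  · rw [← disjoint_coe, Set.Finite.coe_toFinset]
    exact Set.disjoint_left.mpr fun _ ⟨w, _, hw⟩ => hw ▸ w.2
  · intro v hv w hvw hwS
    rw [Set.Finite.mem_toFinset] at hv ⊢
    exact SimpleGraph.ConnectedComponent.mem_image_val_supp_of_adj hv hwS hvw
  · rwa [← Set.ncard_coe_finset, ← Set.ncard_coe_finset, coe_inter, coe_inter,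
      Set.Finite.coe_toFinset]

theorem stmt_5 {V : Type*} [Fintype V] (G : SimpleGraph V) (k : ℕ) (hk : 1 ≤ k)
    (X Y : Finset V) (hdisj : Disjoint X Y) (hcover : X ∪ Y = Finset.univ)
    (hbip : ∀ u v : V, G.Adj u v → (u ∈ X ∧ v ∈ Y) ∨ (u ∈ Y ∧ v ∈ X))
    (hreg : ∀ v : V, G.degree v = k)
    (S : Finset V) (hS : S ⊆ X) :
    Set.ncard {c : (G.induce {v : V | v ∉ S}).ConnectedComponent |
      ((Subtype.val '' c.supp) ∩ ↑X).ncard < ((Subtype.val '' c.supp) ∩ ↑Y).ncard}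
      ≤ S.card :=
  stmt_5_general G k hk X Y hdisj hbip hreg S hS
end
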